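/- arXiv:1510.05455 — 2 statements merged into one kernel-verified Lean document; each statement's English description precedes it below -/
import Mathlib

section
/- Let v be a radial weight satisfying M₂(v) = sup_{0<r<1} (∫₀^r v̂(s)/(1-s)⁴ ds)^{1/2} (∫_r¹ (1-s)²/v̂(s) ds)^{1/2} < ∞. Then sup_{0≤r<1} (∫₀^r v(s)/(1-s)³ ds)^{1/2} · (∫_r¹ (1-s)²/v̂(s) ds)^{1/2} < ∞. -/
open MeasureTheory Real Set Filter

noncomputable section

/-- `hatw v r = ∫_r^1 v(s) ds`. -/
def hatw (v : ℝ → ℝ) (r : ℝ) : ℝ := ∫ s in r..1, v s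

/-- A radial weight: measurable, positive on `[0,1)`, integrable on `(0,1)`. -/
def RadialWeight (v : ℝ → ℝ) : Prop :=
  Measurable v ∧ (∀ r ∈ Set.Ico (0:ℝ) 1, 0 < v r) ∧
    MeasureTheory.IntegrableOn v (Set.Ioo 0 1)

/-- Membership in the class `D̂`. -/
def DoublingD (v : ℝ → ℝ) : Prop :=
  ∃ C : ℝ, 1 ≤ C ∧ ∀ r ∈ Set.Ico (0:ℝ) 1, hatw v r ≤ C * hatw v ((1+r)/2)

/-- Squared Dirichlet-type norm `‖f‖_{D_v}^2`. -/
def DvSq (v : ℝ → ℝ) (f : ℂ → ℂ) : ENNReal :=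
  (‖f 0‖₊ : ENNReal)^2 +
    (ENNReal.ofReal Real.pi)⁻¹ *
      ∫⁻ z in Metric.ball (0:ℂ) 1, (‖deriv f z‖₊ : ENNReal)^2 * ENNReal.ofReal (v ‖z‖)

/-- The Muckenhoupt type quantity `M₁(v)`. -/
def M1v (v : ℝ → ℝ) : ENNReal :=
  ⨆ r ∈ Set.Ioo (0:ℝ) 1,
    (∫⁻ s in Set.Ioo r 1, ENNReal.ofReal (hatw v s / (1-s)^2)) ^ (1/2 : ℝ) *
    (∫⁻ s in Set.Ioo (0:ℝ) r, ENNReal.ofReal (1 / hatw v s)) ^ (1/2 : ℝ)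

/-- The Muckenhoupt type quantity `M₂(v)`. -/
def M2v (v : ℝ → ℝ) : ENNReal :=
  ⨆ r ∈ Set.Ioo (0:ℝ) 1,
    (∫⁻ s in Set.Ioo (0:ℝ) r, ENNReal.ofReal (hatw v s / (1-s)^4)) ^ (1/2 : ℝ) *
    (∫⁻ s in Set.Ioo r 1, ENNReal.ofReal ((1-s)^2 / hatw v s)) ^ (1/2 : ℝ)

/-- The moment `v_x = ∫_0^1 s^x v(s) ds`. -/
def vx (v : ℝ → ℝ) (x : ℕ) : ℝ := ∫ s in (0:ℝ)..1, s^x * v s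

/-- `M_∞(s,f)`, the maximum of `|f|` on the circle of radius `s`. -/
def Minf (f : ℂ → ℂ) (s : ℝ) : ℝ := sSup ((fun z => ‖f z‖) '' Metric.sphere (0:ℂ) s)

/-- `M₂(r,h)`. -/
def M2mean (h : ℂ → ℂ) (r : ℝ) : ℝ :=
  Real.sqrt ((2*Real.pi)⁻¹ * ∫ θ in (-Real.pi)..Real.pi, ‖h ((r:ℂ) * Complex.exp (θ * Complex.I))‖^2)

/-- The norm of `B(2,∞)` (with values in `[0,∞]`). -/
def B2infE (g : ℂ → ℂ) : ENNReal :=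
  (‖g 0‖₊ : ENNReal) +
    ⨆ r ∈ Set.Ioo (0:ℝ) 1, ENNReal.ofReal (M2mean (deriv g) r * Real.sqrt (1-r))

/-- The `p`-th power of the norm of `B(2,p)` (with values in `[0,∞]`). -/
def B2pE (p : ℝ) (g : ℂ → ℂ) : ENNReal :=
  ENNReal.ofReal (‖g 0‖ ^ p) +
    ∫⁻ r in Set.Ioo (0:ℝ) 1, ENNReal.ofReal (M2mean (deriv g) r ^ p * (1-r)^(p/2-1))

/-- The generalized Hilbert operator `H_g`. -/
def Hg (g f : ℂ → ℂ) (z : ℂ) : ℂ := ∫ t in Set.Ioo (0:ℝ) 1, f t * deriv g (t * z)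

/-- The Hilbert operator `H` acting on functions on `[0,1)`. -/
def Hop (φ : ℝ → ℂ) (z : ℂ) : ℂ := ∫ t in Set.Ioo (0:ℝ) 1, φ t / (1 - t * z)

/-- The sublinear Hilbert operator `H̃`. -/
def Htil (φ : ℝ → ℂ) (z : ℂ) : ℂ := ∫ t in Set.Ioo (0:ℝ) 1, (‖φ t‖ : ℂ) / (1 - t * z)

/-- Squared norm in `L²_{V̂₂}`. -/
def L2V2sq (v : ℝ → ℝ) (φ : ℝ → ℂ) : ENNReal :=
  ∫⁻ t in Set.Ioo (0:ℝ) 1, (‖φ t‖₊ : ENNReal)^2 * ENNReal.ofReal (hatw v t / (1-t)^2)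

/-- Taylor coefficient `ĝ(k)` of `g` at the origin. -/
def gcoef (g : ℂ → ℂ) (k : ℕ) : ℂ := iteratedDeriv k g 0 / (Nat.factorial k)

/-! Since `(1 - s)⁻³ = 1 + 3 ∫₀ˢ (1 - t)⁻⁴ dt`, Tonelli gives
`∫₀^r v(s) / (1 - s)³ ds ≤ v̂(0) + 3 ∫₀^r v̂(t) / (1 - t)⁴ dt`, so the product in question is at most
`v̂(0)^{1/2} (∫₀¹ (1 - s)² / v̂(s) ds)^{1/2} + √3 M₂(v)`. The last integral is finite: on `(0, 1/2]`
its integrand is at most `1 / v̂(1/2)`, and on `(1/2, 1)` it is controlled by `M₂(v)` because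
`∫₀^{1/2} v̂(s) / (1 - s)⁴ ds > 0`. -/

open scoped ENNReal

theorem lintegral_Ioo_lintegral_Ioo_swap {f g : ℝ → ℝ≥0∞} (hf : Measurable f)
    (hg : Measurable g) (a b : ℝ) :
    ∫⁻ s in Ioo a b, ∫⁻ t in Ioo a s, f s * g t =
      ∫⁻ t in Ioo a b, (∫⁻ s in Ioo t b, f s) * g t := by
  set F : ℝ → ℝ → ℝ≥0∞ := fun s t =>
    {p : ℝ × ℝ | p.2 < p.1}.indicator (fun p => f p.1 * g p.2) (s, t)
  have hF : Measurable (Function.uncurry F) :=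
    ((hf.comp measurable_fst).mul (hg.comp measurable_snd)).indicator
      (measurableSet_lt measurable_snd measurable_fst)
  have inner_t : ∀ s ∈ Ioo a b, ∫⁻ t in Ioo a b, F s t = ∫⁻ t in Ioo a s, f s * g t := by
    intro s hs
    have : ∀ t, F s t = (Iio s).indicator (fun t => f s * g t) t := fun t => by
      by_cases h : t < s <;> simp [F, indicator, h]
    simp only [this]
    rw [lintegral_indicator measurableSet_Iio, Measure.restrict_restrict measurableSet_Iio,
      Iio_inter_Ioo, min_eq_left hs.2.le]
  have inner_s : ∀ t ∈ Ioo a b, ∫⁻ s in Ioo a b, F s t = (∫⁻ s in Ioo t b, f s) * g t := by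
    intro t ht
    have : ∀ s, F s t = (Ioi t).indicator f s * g t := fun s => by
      by_cases h : t < s <;> simp [F, indicator, h]
    simp only [this]
    rw [lintegral_mul_const _ (hf.indicator measurableSet_Ioi),
      lintegral_indicator measurableSet_Ioi, Measure.restrict_restrict measurableSet_Ioi,
      Ioi_inter_Ioo, max_eq_left ht.1.le]
  calc ∫⁻ s in Ioo a b, ∫⁻ t in Ioo a s, f s * g t
      = ∫⁻ s in Ioo a b, ∫⁻ t in Ioo a b, F s t :=
        (setLIntegral_congr_fun measurableSet_Ioo inner_t).symm
    _ = ∫⁻ t in Ioo a b, ∫⁻ s in Ioo a b, F s t := lintegral_lintegral_swap hF.aemeasurable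
    _ = _ := setLIntegral_congr_fun measurableSet_Ioo inner_s

theorem continuousOn_inv_one_sub_pow (n : ℕ) :
    ContinuousOn (fun t : ℝ => ((1 - t) ^ n)⁻¹) (Iio 1) :=
  ContinuousOn.inv₀ (by fun_prop) fun _ ht => pow_ne_zero _ (sub_ne_zero.2 (ne_of_gt ht))

theorem integral_inv_one_sub_pow_succ {s : ℝ} (hs0 : 0 ≤ s) (hs1 : s < 1) {n : ℕ} (hn : n ≠ 0) :
    ∫ t in (0:ℝ)..s, ((1 - t) ^ (n + 1))⁻¹ = (((1 - s) ^ n)⁻¹ - 1) / n := by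
  have hIcc : uIcc 0 s ⊆ Iio 1 := by
    rw [uIcc_of_le hs0]
    exact fun t ht => ht.2.trans_lt hs1
  have hderiv : ∀ t ∈ uIcc 0 s,
      HasDerivAt (fun t : ℝ => ((1 - t) ^ n)⁻¹ / n) ((1 - t) ^ (n + 1))⁻¹ t := by
    intro t ht
    have h1t : 1 - t ≠ 0 := sub_ne_zero.2 (ne_of_gt (hIcc ht))
    have hpow : HasDerivAt (fun t : ℝ => (1 - t) ^ n) (n * (1 - t) ^ (n - 1) * -1) t := by
      simpa using ((hasDerivAt_id t).const_sub 1).fun_pow n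
    refine ((hpow.fun_inv (pow_ne_zero n h1t)).div_const (n : ℝ)).congr_deriv ?_
    obtain ⟨m, rfl⟩ := Nat.exists_eq_add_one_of_ne_zero hn
    simp only [Nat.add_sub_cancel, Nat.cast_add_one]
    field_simp
    ring
  rw [intervalIntegral.integral_eq_sub_of_hasDerivAt hderiv
    ((continuousOn_inv_one_sub_pow (n + 1)).mono hIcc).intervalIntegrable]
  simp [sub_div]

theorem ofReal_inv_one_sub_pow_eq {s : ℝ} (hs0 : 0 ≤ s) (hs1 : s < 1) {n : ℕ} (hn : n ≠ 0) :
    ENNReal.ofReal ((1 - s) ^ n)⁻¹ =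
      1 + n * ∫⁻ t in Ioo 0 s, ENNReal.ofReal ((1 - t) ^ (n + 1))⁻¹ := by
  have hint : IntegrableOn (fun t : ℝ => ((1 - t) ^ (n + 1))⁻¹) (Ioo 0 s) :=
    ((continuousOn_inv_one_sub_pow (n + 1)).mono fun t ht => ht.2.trans_lt hs1).integrableOn_Icc
      |>.mono_set Ioo_subset_Icc_self
  have hge : 1 ≤ ((1 - s) ^ n)⁻¹ :=
    (one_le_inv₀ (by positivity)).2 (pow_le_one₀ (by linarith) (by linarith))
  have hnn : 0 ≤ᵐ[volume.restrict (Ioo 0 s)] fun t : ℝ => ((1 - t) ^ (n + 1))⁻¹ :=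
    (ae_restrict_iff' measurableSet_Ioo).2 (ae_of_all _ fun t ht => by
      have : 0 < 1 - t := by linarith [ht.2]
      positivity)
  rw [← ofReal_integral_eq_lintegral_ofReal hint hnn, ← integral_Ioc_eq_integral_Ioo,
    ← intervalIntegral.integral_of_le hs0, integral_inv_one_sub_pow_succ hs0 hs1 hn,
    ← ENNReal.ofReal_natCast, ← ENNReal.ofReal_mul (Nat.cast_nonneg n),
    mul_div_cancel₀ _ (Nat.cast_ne_zero.2 hn), ← ENNReal.ofReal_one,
    ← ENNReal.ofReal_add zero_le_one (sub_nonneg.2 hge), add_sub_cancel]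

namespace RadialWeight

variable {v : ℝ → ℝ}

theorem ofReal_hatw (hv : RadialWeight v) {t : ℝ} (ht0 : 0 ≤ t) (ht1 : t ≤ 1) :
    ENNReal.ofReal (hatw v t) = ∫⁻ s in Ioo t 1, ENNReal.ofReal (v s) := by
  rw [hatw, intervalIntegral.integral_of_le ht1, integral_Ioc_eq_integral_Ioo]
  exact ofReal_integral_eq_lintegral_ofReal (hv.2.2.mono_set (Ioo_subset_Ioo_left ht0))
    ((ae_restrict_iff' measurableSet_Ioo).2 (ae_of_all _
      fun s hs => (hv.2.1 s ⟨ht0.trans hs.1.le, hs.2⟩).le))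

theorem hatw_pos (hv : RadialWeight v) {t : ℝ} (ht : t ∈ Ico (0:ℝ) 1) : 0 < hatw v t := by
  have : 0 < ∫⁻ s in Ioo t 1, ENNReal.ofReal (v s) := by
    rw [setLIntegral_pos_iff hv.1.ennreal_ofReal]
    refine lt_of_lt_of_le ?_ (measure_mono fun s hs =>
      ⟨(ENNReal.ofReal_pos.2 (hv.2.1 s ⟨ht.1.trans hs.1.le, hs.2⟩)).ne', hs⟩)
    simpa [Real.volume_Ioo] using ht.2
  rwa [← hv.ofReal_hatw ht.1 ht.2.le, ENNReal.ofReal_pos] at this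

theorem hatw_le_hatw (hv : RadialWeight v) {a b : ℝ} (ha : a ∈ Ico (0:ℝ) 1) (hab : a ≤ b)
    (hb : b ≤ 1) : hatw v b ≤ hatw v a := by
  rw [← ENNReal.ofReal_le_ofReal_iff (hv.hatw_pos ha).le, hv.ofReal_hatw (ha.1.trans hab) hb,
    hv.ofReal_hatw ha.1 ha.2.le]
  exact lintegral_mono_set (Ioo_subset_Ioo_left hab)

theorem lintegral_div_one_sub_pow_three_le (hv : RadialWeight v) {r : ℝ} (hr : r ≤ 1) :
    ∫⁻ s in Ioo 0 r, ENNReal.ofReal (v s / (1 - s) ^ 3) ≤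
      ENNReal.ofReal (hatw v 0) + 3 * ∫⁻ s in Ioo 0 r, ENNReal.ofReal (hatw v s / (1 - s) ^ 4) := by
  set g : ℝ → ℝ≥0∞ := fun t => ENNReal.ofReal ((1 - t) ^ 4)⁻¹
  have hg : Measurable g := (((measurable_const.sub measurable_id).pow_const 4).inv).ennreal_ofReal
  have hexpand : ∀ s ∈ Ioo (0:ℝ) r, ENNReal.ofReal (v s / (1 - s) ^ 3) =
      ENNReal.ofReal (v s) + 3 * ∫⁻ t in Ioo 0 s, ENNReal.ofReal (v s) * g t := by
    intro s hs
    rw [div_eq_mul_inv, ENNReal.ofReal_mul (hv.2.1 s ⟨hs.1.le, hs.2.trans_le hr⟩).le,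
      ofReal_inv_one_sub_pow_eq hs.1.le (hs.2.trans_le hr) three_ne_zero,
      lintegral_const_mul' _ _ ENNReal.ofReal_ne_top]
    push_cast
    ring
  have hinner : ∀ t ∈ Ioo (0:ℝ) r, (∫⁻ s in Ioo t r, ENNReal.ofReal (v s)) * g t ≤
      ENNReal.ofReal (hatw v t / (1 - t) ^ 4) := by
    intro t ht
    rw [div_eq_mul_inv, ENNReal.ofReal_mul (hv.hatw_pos ⟨ht.1.le, ht.2.trans_le hr⟩).le,
      hv.ofReal_hatw ht.1.le (ht.2.le.trans hr)]
    exact mul_le_mul_left (lintegral_mono_set (Ioo_subset_Ioo_right hr)) _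
  calc ∫⁻ s in Ioo 0 r, ENNReal.ofReal (v s / (1 - s) ^ 3)
      = (∫⁻ s in Ioo 0 r, ENNReal.ofReal (v s)) +
          3 * ∫⁻ s in Ioo 0 r, ∫⁻ t in Ioo 0 s, ENNReal.ofReal (v s) * g t := by
        rw [setLIntegral_congr_fun measurableSet_Ioo hexpand,
          lintegral_add_left hv.1.ennreal_ofReal, lintegral_const_mul' _ _ ENNReal.ofNat_ne_top]
    _ = (∫⁻ s in Ioo 0 r, ENNReal.ofReal (v s)) +
          3 * ∫⁻ t in Ioo 0 r, (∫⁻ s in Ioo t r, ENNReal.ofReal (v s)) * g t := by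
        rw [lintegral_Ioo_lintegral_Ioo_swap hv.1.ennreal_ofReal hg]
    _ ≤ _ := by
        gcongr ?_ + 3 * ?_
        · rw [hv.ofReal_hatw le_rfl zero_le_one]
          exact lintegral_mono_set (Ioo_subset_Ioo_right hr)
        · exact setLIntegral_mono' measurableSet_Ioo hinner

theorem sqrt_M2_term_le_M2v {r : ℝ} (hr : r ∈ Ico (0:ℝ) 1) :
    (∫⁻ s in Ioo 0 r, ENNReal.ofReal (hatw v s / (1 - s) ^ 4)) ^ (1 / 2 : ℝ) *
      (∫⁻ s in Ioo r 1, ENNReal.ofReal ((1 - s) ^ 2 / hatw v s)) ^ (1 / 2 : ℝ) ≤ M2v v := by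
  rcases hr.1.eq_or_lt with rfl | hr0
  · simp
  · exact le_iSup₂ (f := fun r (_ : r ∈ Ioo (0:ℝ) 1) =>
      (∫⁻ s in Ioo 0 r, ENNReal.ofReal (hatw v s / (1 - s) ^ 4)) ^ (1 / 2 : ℝ) *
      (∫⁻ s in Ioo r 1, ENNReal.ofReal ((1 - s) ^ 2 / hatw v s)) ^ (1 / 2 : ℝ)) r ⟨hr0, hr.2⟩

theorem lintegral_one_sub_sq_div_hatw_ne_top (hv : RadialWeight v) (hM2 : M2v v < ⊤) :
    ∫⁻ s in Ioo 0 1, ENNReal.ofReal ((1 - s) ^ 2 / hatw v s) ≠ ⊤ := by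
  have hhalf : 0 < hatw v (1 / 2) := hv.hatw_pos (by norm_num)
  have hhead : ∫⁻ s in Ioc 0 (1 / 2), ENNReal.ofReal ((1 - s) ^ 2 / hatw v s) < ⊤ := by
    refine setLIntegral_lt_top_of_le_nnreal (by simp) ⟨(1 / hatw v (1 / 2)).toNNReal,
      fun s hs => ENNReal.ofReal_le_ofReal ?_⟩
    exact div_le_div₀ zero_le_one (pow_le_one₀ (by linarith [hs.2]) (by linarith [hs.1])) hhalf
      (hv.hatw_le_hatw ⟨hs.1.le, by linarith [hs.2]⟩ hs.2 (by norm_num))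
  have hweight : 0 < ∫⁻ s in Ioo 0 (1 / 2), ENNReal.ofReal (hatw v s / (1 - s) ^ 4) := by
    have hlow : ∀ s ∈ Ioo (0:ℝ) (1 / 2), hatw v (1 / 2) ≤ hatw v s / (1 - s) ^ 4 := by
      intro s hs
      have hs' : s ∈ Ico (0:ℝ) 1 := ⟨hs.1.le, by linarith [hs.2]⟩
      exact (hv.hatw_le_hatw hs' hs.2.le (by norm_num)).trans <| le_div_self
        (hv.hatw_pos hs').le (pow_pos (by linarith [hs.2]) 4)
        (pow_le_one₀ (by linarith [hs.2]) (by linarith [hs.1]))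
    refine lt_of_lt_of_le ?_ (setLIntegral_mono' measurableSet_Ioo fun s hs =>
      ENNReal.ofReal_le_ofReal (hlow s hs))
    simpa [Real.volume_Ioo] using hhalf
  have htail : ∫⁻ s in Ioo (1 / 2) 1, ENNReal.ofReal ((1 - s) ^ 2 / hatw v s) ≠ ⊤ := by
    intro htop
    have := (sqrt_M2_term_le_M2v (v := v) (r := 1 / 2) (by norm_num)).trans_lt hM2
    rw [htop, ENNReal.top_rpow_of_pos (by norm_num),
      ENNReal.mul_top (ENNReal.rpow_pos_of_nonneg hweight (by norm_num)).ne'] at this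
    exact this.ne rfl
  refine ne_top_of_le_ne_top (ENNReal.add_ne_top.2 ⟨hhead.ne, htail⟩)
    ((lintegral_mono_set ?_).trans (lintegral_union_le _ _ _))
  intro s hs
  rcases le_or_gt s (1 / 2) with h | h
  exacts [Or.inl ⟨hs.1, h⟩, Or.inr ⟨h, hs.2⟩]

theorem sqrt_mul_sqrt_le_add_M2v (hv : RadialWeight v) {r : ℝ} (hr : r ∈ Ico (0:ℝ) 1) :
    (∫⁻ s in Ioo 0 r, ENNReal.ofReal (v s / (1 - s) ^ 3)) ^ (1 / 2 : ℝ) *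
        (∫⁻ s in Ioo r 1, ENNReal.ofReal ((1 - s) ^ 2 / hatw v s)) ^ (1 / 2 : ℝ) ≤
      ENNReal.ofReal (hatw v 0) ^ (1 / 2 : ℝ) *
          (∫⁻ s in Ioo 0 1, ENNReal.ofReal ((1 - s) ^ 2 / hatw v s)) ^ (1 / 2 : ℝ) +
        3 ^ (1 / 2 : ℝ) * M2v v := by
  set A := ∫⁻ s in Ioo 0 r, ENNReal.ofReal (hatw v s / (1 - s) ^ 4)
  set B := ∫⁻ s in Ioo r 1, ENNReal.ofReal ((1 - s) ^ 2 / hatw v s)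
  calc _ ≤ (ENNReal.ofReal (hatw v 0) + 3 * A) ^ (1 / 2 : ℝ) * B ^ (1 / 2 : ℝ) := by
        gcongr
        exact hv.lintegral_div_one_sub_pow_three_le hr.2.le
    _ ≤ (ENNReal.ofReal (hatw v 0) ^ (1 / 2 : ℝ) + (3 * A) ^ (1 / 2 : ℝ)) * B ^ (1 / 2 : ℝ) := by
        gcongr
        exact ENNReal.rpow_add_le_add_rpow _ _ (by norm_num) (by norm_num)
    _ = ENNReal.ofReal (hatw v 0) ^ (1 / 2 : ℝ) * B ^ (1 / 2 : ℝ) +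
          3 ^ (1 / 2 : ℝ) * (A ^ (1 / 2 : ℝ) * B ^ (1 / 2 : ℝ)) := by
        rw [ENNReal.mul_rpow_of_nonneg _ _ (by norm_num)]
        ring
    _ ≤ _ := by
        gcongr
        · exact lintegral_mono_set (Ioo_subset_Ioo_left hr.1)
        · exact sqrt_M2_term_le_M2v hr

end RadialWeight

/-- Lemma 2.2: if `M₂(v) < ∞`, then
`sup_{0≤r<1} (∫_0^r v(s)/(1-s)³ ds)^{1/2} (∫_r^1 (1-s)²/v̂(s) ds)^{1/2} < ∞`. -/
theorem statement3 (v : ℝ → ℝ) (hv : RadialWeight v) (hM2 : M2v v < ⊤) :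
    (⨆ r ∈ Set.Ico (0:ℝ) 1,
      (∫⁻ s in Set.Ioo (0:ℝ) r, ENNReal.ofReal (v s / (1-s)^3)) ^ (1/2 : ℝ) *
      (∫⁻ s in Set.Ioo r 1, ENNReal.ofReal ((1-s)^2 / hatw v s)) ^ (1/2 : ℝ)) < ⊤ := by
  refine lt_of_le_of_lt (iSup₂_le fun r hr => hv.sqrt_mul_sqrt_le_add_M2v hr) <|
    ENNReal.add_lt_top.2 ⟨ENNReal.mul_lt_top ?_ ?_, ENNReal.mul_lt_top ?_ hM2⟩
  · exact ENNReal.rpow_lt_top_of_nonneg (by norm_num) ENNReal.ofReal_ne_top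
  · exact ENNReal.rpow_lt_top_of_nonneg (by norm_num) (hv.lintegral_one_sub_sq_div_hatw_ne_top hM2)
  · exact ENNReal.rpow_lt_top_of_nonneg (by norm_num) ENNReal.ofNat_ne_top

end
end

section
/- Let v be a radial weight in the class D̂ satisfying M₁(v) = sup_{0<r<1} (∫_r¹ v̂(s)/(1-s)² ds)^{1/2} (∫₀^r 1/v̂(s) ds)^{1/2} < ∞ and M₂(v) = sup_{0<r<1} (∫₀^r v̂(s)/(1-s)⁴ ds)^{1/2} (∫_r¹ (1-s)²/v̂(s) ds)^{1/2} < ∞. Then there exist constants 0 < c ≤ C depending only on v such that for every positive integer k, c/((k+1)³ v_{2k}) ≤ Σ_{n=1}^∞ 1/(n²(n+k+1)² v_{2n-1}) ≤ C/((k+1)³ v_{2k}), where v_x = ∫₀¹ s^x v(s) ds. -/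
open MeasureTheory Real Set Filter

noncomputable section

/-! For `v ∈ D̂` the moments are governed by the tail `V = hatw v`: two doubling steps and
`s ^ (2n+1) ≥ 1/2` near `1` give `V(1 - 1/(n+1)) ≲ v_{2n+1}`, while cutting `[0, 1 - 1/(k+1)]`
at the points `1 - 2^m/(k+1)` gives `v_{2k} ≲ V(1 - 1/(k+1))`, because doubling costs only `C^m`
on the `m`-th piece whereas `s^{2k}` is there at most `exp(-2^m)`.

The terms with `k ≤ n ≤ 2k` alone give the lower bound. For the upper bound put
`r_n = 1 - 1/(n+1)`: the terms with `n < k` are at most `(k+1)^{-2} ∫_0^{r_k} 1/V` and those with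
`n ≥ k` at most `∫_{r_k}^1 (1-s)^2/V`, up to constants. Bounding the companion integrals in
`M₁(v)` and `M₂(v)` from below by doubling turns `M₁(v), M₂(v) < ∞` into the bounds
`(1 - r_k)/V(r_k)` and `(1 - r_k)^3/V(r_k)` for these two integrals. -/

open scoped ENNReal Topology

lemma summable_pow_mul_exp_neg_two_pow {C : ℝ} (hC : 0 ≤ C) :
    Summable fun m : ℕ => C ^ (m + 1) * exp (-2 ^ m) := by
  refine summable_of_ratio_norm_eventually_le (r := 1 / 2) (by norm_num) ?_
  have hlim : Tendsto (fun m : ℕ => C * exp (-2 ^ m)) atTop (𝓝 0) := by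
    simpa using ((tendsto_exp_atBot.comp (tendsto_neg_atTop_atBot.comp
      (tendsto_pow_atTop_atTop_of_one_lt one_lt_two))).const_mul C)
  filter_upwards [hlim.eventually_le_const (by norm_num : (0 : ℝ) < 1 / 2)] with m hm
  have hsucc : C ^ (m + 1 + 1) * exp (-2 ^ (m + 1)) =
      C * exp (-2 ^ m) * (C ^ (m + 1) * exp (-2 ^ m)) := by
    rw [pow_succ (2 : ℝ), mul_two, neg_add, exp_add]; ring
  rw [Real.norm_of_nonneg (by positivity), Real.norm_of_nonneg (by positivity), hsucc]
  exact mul_le_mul_of_nonneg_right hm (by positivity)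

lemma ofReal_mul_le_setLIntegral_Ioo {f : ℝ → ℝ} {a b c : ℝ} (hc : 0 ≤ c)
    (h : ∀ s ∈ Ioo a b, c ≤ f s) :
    ENNReal.ofReal (c * (b - a)) ≤ ∫⁻ s in Ioo a b, ENNReal.ofReal (f s) := by
  rw [ENNReal.ofReal_mul hc, ← Real.volume_Ioo, ← setLIntegral_const]
  exact setLIntegral_mono' measurableSet_Ioo fun s hs => ENNReal.ofReal_le_ofReal (h s hs)

lemma Monotone.pairwise_disjoint_on_Ioo_add_one {β : Type*} [Preorder β] {a : ℕ → β}
    (ha : Monotone a) : Pairwise (Function.onFun Disjoint fun n => Ioo (a n) (a (n + 1))) := by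
  simpa only [Order.succ_eq_add_one] using ha.pairwise_disjoint_on_Ioo_succ

lemma sum_setLIntegral_Ioo_le {a : ℕ → ℝ} (ha : Monotone a) (F : ℝ → ℝ≥0∞) (k : ℕ) :
    ∑ n ∈ Finset.range k, ∫⁻ s in Ioo (a n) (a (n + 1)), F s ≤
      ∫⁻ s in Ioo (a 0) (a k), F s := by
  rw [← lintegral_biUnion_finset (ha.pairwise_disjoint_on_Ioo_add_one.set_pairwise _)
    fun _ _ => measurableSet_Ioo]
  exact lintegral_mono_set (iUnion₂_subset fun n hn =>
    Ioo_subset_Ioo (ha (Nat.zero_le n)) (ha (Finset.mem_range.mp hn)))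

lemma tsum_setLIntegral_Ioo_le {a : ℕ → ℝ} (ha : Monotone a) {b : ℝ} (hb : ∀ n, a n ≤ b)
    (F : ℝ → ℝ≥0∞) :
    ∑' n, ∫⁻ s in Ioo (a n) (a (n + 1)), F s ≤ ∫⁻ s in Ioo (a 0) b, F s := by
  rw [← lintegral_iUnion (fun _ => measurableSet_Ioo) ha.pairwise_disjoint_on_Ioo_add_one]
  exact lintegral_mono_set (iUnion_subset fun n => Ioo_subset_Ioo (ha (Nat.zero_le n)) (hb _))

lemma le_sq_mul_ofReal_inv_of_rpow_mul_le {A B M : ℝ≥0∞} {a : ℝ}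
    (hM : A ^ (1 / 2 : ℝ) * B ^ (1 / 2 : ℝ) ≤ M) (ha : 0 < a) (hA : ENNReal.ofReal a ≤ A) :
    B ≤ M ^ 2 * ENNReal.ofReal (1 / a) := by
  have hsq (X : ℝ≥0∞) : (X ^ (1 / 2 : ℝ)) ^ 2 = X := by
    rw [← ENNReal.rpow_natCast, ← ENNReal.rpow_mul]; norm_num
  have hAB : B * ENNReal.ofReal a ≤ M ^ 2 :=
    calc B * ENNReal.ofReal a ≤ A * B := by rw [mul_comm]; gcongr
      _ = (A ^ (1 / 2 : ℝ) * B ^ (1 / 2 : ℝ)) ^ 2 := by rw [mul_pow, hsq, hsq]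
      _ ≤ M ^ 2 := by gcongr
  rwa [← ENNReal.le_div_iff_mul_le (Or.inl (ENNReal.ofReal_pos.mpr ha).ne')
    (Or.inl ENNReal.ofReal_ne_top), div_eq_mul_inv, ← ENNReal.ofReal_inv_of_pos ha,
    ← one_div] at hAB

def dyadicPoint (ρ : ℝ) (m : ℕ) : ℝ := max 0 (1 - 2 ^ m * (1 - ρ))

lemma dyadicPoint_zero {ρ : ℝ} (hρ : 0 ≤ ρ) : dyadicPoint ρ 0 = ρ := by
  simp [dyadicPoint, hρ]

lemma dyadicPoint_nonneg (ρ : ℝ) (m : ℕ) : 0 ≤ dyadicPoint ρ m := le_max_left _ _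

lemma one_sub_dyadicPoint_le (ρ : ℝ) (m : ℕ) : 1 - dyadicPoint ρ m ≤ 2 ^ m * (1 - ρ) := by
  rw [dyadicPoint]
  linarith [le_max_right 0 (1 - 2 ^ m * (1 - ρ))]

lemma dyadicPoint_le {ρ : ℝ} (hρ : 0 ≤ ρ) (hρ1 : ρ ≤ 1) (m : ℕ) :
    dyadicPoint ρ m ≤ ρ :=
  max_le hρ (by nlinarith [one_le_pow₀ (M₀ := ℝ) one_le_two (n := m)])

lemma dyadicPoint_succ_le {ρ : ℝ} (hρ1 : ρ ≤ 1) (m : ℕ) :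
    dyadicPoint ρ (m + 1) ≤ dyadicPoint ρ m :=
  max_le_max le_rfl (by rw [pow_succ]; nlinarith [pow_pos two_pos (M₀ := ℝ) m])

lemma dyadicPoint_le_exp (ρ : ℝ) (m : ℕ) : dyadicPoint ρ m ≤ exp (-(2 ^ m * (1 - ρ))) :=
  max_le (exp_pos _).le (one_sub_le_exp_neg _)

lemma dyadicPoint_eq_zero {ρ : ℝ} {m : ℕ} (h : 1 ≤ 2 ^ m * (1 - ρ)) :
    dyadicPoint ρ m = 0 :=
  max_eq_left (by linarith)

lemma hatw_le_pow_mul_hatw_one_sub {v : ℝ → ℝ} {C : ℝ} (hC : 0 ≤ C)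
    (hD : ∀ r ∈ Ico (0 : ℝ) 1, hatw v r ≤ C * hatw v ((1 + r) / 2)) (j : ℕ) {r : ℝ}
    (hr : 0 ≤ r) (hr1 : r < 1) : hatw v r ≤ C ^ j * hatw v (1 - (1 - r) / 2 ^ j) := by
  induction j generalizing r with
  | zero => simp
  | succ j ih =>
    have hmid : 1 - (1 - (1 + r) / 2) / 2 ^ j = 1 - (1 - r) / 2 ^ (j + 1) := by
      rw [pow_succ]; ring
    calc hatw v r ≤ C * hatw v ((1 + r) / 2) := hD r ⟨hr, hr1⟩
      _ ≤ C * (C ^ j * hatw v (1 - (1 - (1 + r) / 2) / 2 ^ j)) :=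
          mul_le_mul_of_nonneg_left (ih (by linarith) (by linarith)) hC
      _ = C ^ (j + 1) * hatw v (1 - (1 - r) / 2 ^ (j + 1)) := by rw [hmid, pow_succ]; ring

def radius (n : ℕ) : ℝ := 1 - 1 / ((n : ℝ) + 1)

lemma one_sub_radius (n : ℕ) : 1 - radius n = 1 / ((n : ℝ) + 1) := by
  rw [radius]; ring

lemma radius_zero : radius 0 = 0 := by simp [radius]

lemma radius_nonneg (n : ℕ) : 0 ≤ radius n := by
  rw [radius, sub_nonneg, div_le_one (by positivity)]
  linarith [(n.cast_nonneg : (0 : ℝ) ≤ n)]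

lemma radius_lt_one (n : ℕ) : radius n < 1 := by
  rw [radius]; linarith [(by positivity : 0 < 1 / ((n : ℝ) + 1))]

lemma radius_mono : Monotone radius := fun m n hmn => by
  rw [radius, radius]
  gcongr

lemma half_le_radius {k : ℕ} (hk : 1 ≤ k) : 1 / 2 ≤ radius k :=
  calc (1 / 2 : ℝ) = radius 1 := by norm_num [radius]
    _ ≤ radius k := radius_mono hk

lemma radius_succ_sub (n : ℕ) :
    radius (n + 1) - radius n = 1 / (((n : ℝ) + 1) * ((n : ℝ) + 2)) := by
  rw [radius, radius]; push_cast; field_simp; ring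

def seriesTerm (v : ℝ → ℝ) (k n : ℕ) : ℝ :=
  1 / (((n : ℝ) + 1) ^ 2 * (((n : ℝ) + 1) + (k : ℝ) + 1) ^ 2 * vx v (2 * n + 1))

namespace RadialWeight

variable {v : ℝ → ℝ} {C : ℝ}

lemma pos (hv : RadialWeight v) {s : ℝ} (hs : s ∈ Ico (0 : ℝ) 1) : 0 < v s := hv.2.1 s hs

lemma integrableOn_pow_mul (hv : RadialWeight v) (x : ℕ) :
    IntegrableOn (fun s => s ^ x * v s) (Icc 0 1) :=
  ((integrableOn_Icc_iff_integrableOn_Ioo).mpr hv.2.2).continuousOn_mul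
    (continuous_pow x).continuousOn isCompact_Icc

lemma intervalIntegrable_pow_mul (hv : RadialWeight v) (x : ℕ) {a b : ℝ}
    (ha : a ∈ Icc (0 : ℝ) 1) (hb : b ∈ Icc (0 : ℝ) 1) :
    IntervalIntegrable (fun s => s ^ x * v s) volume a b :=
  ((hv.integrableOn_pow_mul x).mono_set (uIcc_subset_Icc ha hb)).intervalIntegrable

lemma intervalIntegrable (hv : RadialWeight v) {a b : ℝ}
    (ha : a ∈ Icc (0 : ℝ) 1) (hb : b ∈ Icc (0 : ℝ) 1) :
    IntervalIntegrable v volume a b := by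
  simpa using hv.intervalIntegrable_pow_mul 0 ha hb

lemma integral_pow_mul_nonneg (hv : RadialWeight v) (x : ℕ) {a b : ℝ} (ha : 0 ≤ a)
    (hab : a ≤ b) (hb : b ≤ 1) : 0 ≤ ∫ s in a..b, s ^ x * v s := by
  simpa using intervalIntegral.integral_mono_on_of_le_Ioo hab intervalIntegrable_const
    (hv.intervalIntegrable_pow_mul x ⟨ha, hab.trans hb⟩ ⟨ha.trans hab, hb⟩) fun s hs =>
      mul_nonneg (pow_nonneg (ha.trans hs.1.le) x)
        (hv.pos ⟨ha.trans hs.1.le, hs.2.trans_le hb⟩).le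

lemma hatw_pos_s10 (hv : RadialWeight v) {r : ℝ} (hr : 0 ≤ r) (hr1 : r < 1) : 0 < hatw v r :=
  intervalIntegral.intervalIntegral_pos_of_pos_on
    (hv.intervalIntegrable ⟨hr, hr1.le⟩ ⟨zero_le_one, le_rfl⟩)
    (fun _ hs => hv.pos ⟨hr.trans hs.1.le, hs.2⟩) hr1

lemma hatw_eq_integral_add (hv : RadialWeight v) {a b : ℝ} (ha : a ∈ Icc (0 : ℝ) 1)
    (hb : b ∈ Icc (0 : ℝ) 1) : hatw v a = (∫ s in a..b, v s) + hatw v b :=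
  (intervalIntegral.integral_add_adjacent_intervals (hv.intervalIntegrable ha hb)
    (hv.intervalIntegrable hb ⟨zero_le_one, le_rfl⟩)).symm

lemma hatw_anti (hv : RadialWeight v) {a b : ℝ} (ha : 0 ≤ a) (hab : a ≤ b) (hb : b ≤ 1) :
    hatw v b ≤ hatw v a := by
  have := hv.integral_pow_mul_nonneg 0 ha hab hb
  simp only [pow_zero, one_mul] at this
  linarith [hv.hatw_eq_integral_add ⟨ha, hab.trans hb⟩ ⟨ha.trans hab, hb⟩]

lemma hatw_nonneg (hv : RadialWeight v) {r : ℝ} (hr : 0 ≤ r) (hr1 : r ≤ 1) :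
    0 ≤ hatw v r := by
  simpa [hatw] using hv.hatw_anti hr hr1 le_rfl

lemma integral_pow_mul_le (hv : RadialWeight v) (x : ℕ) {a b : ℝ} (ha : 0 ≤ a) (hab : a ≤ b)
    (hb : b ≤ 1) : ∫ s in a..b, s ^ x * v s ≤ b ^ x * hatw v a := by
  have hint : IntervalIntegrable v volume a b :=
    hv.intervalIntegrable ⟨ha, hab.trans hb⟩ ⟨ha.trans hab, hb⟩
  calc ∫ s in a..b, s ^ x * v s ≤ ∫ s in a..b, b ^ x * v s :=
        intervalIntegral.integral_mono_on_of_le_Ioo hab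
          (hv.intervalIntegrable_pow_mul x ⟨ha, hab.trans hb⟩ ⟨ha.trans hab, hb⟩)
          (hint.const_mul _) fun s hs =>
            mul_le_mul_of_nonneg_right (pow_le_pow_left₀ (ha.trans hs.1.le) hs.2.le x)
              (hv.pos ⟨ha.trans hs.1.le, hs.2.trans_le hb⟩).le
    _ = b ^ x * ∫ s in a..b, v s := intervalIntegral.integral_const_mul _ _
    _ ≤ b ^ x * hatw v a := by
        refine mul_le_mul_of_nonneg_left ?_ (pow_nonneg (ha.trans hab) x)
        linarith [hv.hatw_eq_integral_add ⟨ha, hab.trans hb⟩ ⟨ha.trans hab, hb⟩,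
          hv.hatw_nonneg (ha.trans hab) hb]

lemma pow_mul_hatw_le_vx (hv : RadialWeight v) (x : ℕ) {a : ℝ} (ha : 0 ≤ a) (ha1 : a ≤ 1) :
    a ^ x * hatw v a ≤ vx v x := by
  have hint : IntervalIntegrable v volume a 1 :=
    hv.intervalIntegrable ⟨ha, ha1⟩ ⟨zero_le_one, le_rfl⟩
  have hsplit : vx v x = (∫ s in (0 : ℝ)..a, s ^ x * v s) + ∫ s in a..1, s ^ x * v s :=
    (intervalIntegral.integral_add_adjacent_intervals
      (hv.intervalIntegrable_pow_mul x ⟨le_rfl, zero_le_one⟩ ⟨ha, ha1⟩)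
      (hv.intervalIntegrable_pow_mul x ⟨ha, ha1⟩ ⟨zero_le_one, le_rfl⟩)).symm
  have htail : a ^ x * hatw v a ≤ ∫ s in a..1, s ^ x * v s := by
    rw [hatw, ← intervalIntegral.integral_const_mul]
    exact intervalIntegral.integral_mono_on_of_le_Ioo ha1 (hint.const_mul _)
      (hv.intervalIntegrable_pow_mul x ⟨ha, ha1⟩ ⟨zero_le_one, le_rfl⟩) fun s hs =>
        mul_le_mul_of_nonneg_right (pow_le_pow_left₀ ha hs.1.le x)
          (hv.pos ⟨ha.trans hs.1.le, hs.2⟩).le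
  linarith [hv.integral_pow_mul_nonneg x le_rfl ha ha1]

lemma vx_pos (hv : RadialWeight v) (x : ℕ) : 0 < vx v x :=
  intervalIntegral.intervalIntegral_pos_of_pos_on
    (hv.intervalIntegrable_pow_mul x ⟨le_rfl, zero_le_one⟩ ⟨zero_le_one, le_rfl⟩)
    (fun _ hs => mul_pos (pow_pos hs.1 x) (hv.pos ⟨hs.1.le, hs.2⟩)) one_pos

lemma vx_anti (hv : RadialWeight v) : Antitone (vx v) := fun x y hxy =>
  intervalIntegral.integral_mono_on_of_le_Ioo zero_le_one
    (hv.intervalIntegrable_pow_mul y ⟨le_rfl, zero_le_one⟩ ⟨zero_le_one, le_rfl⟩)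
    (hv.intervalIntegrable_pow_mul x ⟨le_rfl, zero_le_one⟩ ⟨zero_le_one, le_rfl⟩)
    fun _ hs => mul_le_mul_of_nonneg_right (pow_le_pow_of_le_one hs.1.le hs.2.le hxy)
        (hv.pos ⟨hs.1.le, hs.2⟩).le

lemma hatw_le_two_mul_vx (hv : RadialWeight v) {x : ℕ} {t : ℝ} (ht : 0 ≤ t) (ht1 : t ≤ 1)
    (hxt : x * (1 - t) ≤ 1 / 2) : hatw v t ≤ 2 * vx v x := by
  have hpow : 1 / 2 ≤ t ^ x := by
    have := one_add_mul_le_pow (a := t - 1) (by linarith) x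
    simp only [add_sub_cancel] at this
    linarith
  nlinarith [hv.pow_mul_hatw_le_vx x ht ht1, hv.hatw_nonneg ht ht1]

lemma hatw_le_pow_mul_hatw (hv : RadialWeight v) (hC : 0 ≤ C)
    (hD : ∀ r ∈ Ico (0 : ℝ) 1, hatw v r ≤ C * hatw v ((1 + r) / 2)) (j : ℕ) {r t : ℝ}
    (hr : 0 ≤ r) (hrt : r ≤ t) (ht : t < 1) (hgap : 1 - r ≤ 2 ^ j * (1 - t)) :
    hatw v r ≤ C ^ j * hatw v t := by
  have h2j : (0 : ℝ) < 2 ^ j := by positivity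
  have hle : t ≤ 1 - (1 - r) / 2 ^ j := by
    rw [le_sub_comm, div_le_iff₀ h2j]; linarith
  have hle1 : 1 - (1 - r) / 2 ^ j ≤ 1 := by
    have : 0 ≤ (1 - r) / 2 ^ j := div_nonneg (by linarith) h2j.le
    linarith
  exact (hatw_le_pow_mul_hatw_one_sub hC hD j hr (hrt.trans_lt ht)).trans
    (mul_le_mul_of_nonneg_left (hv.hatw_anti (hr.trans hrt) hle hle1) (pow_nonneg hC j))

lemma integral_dyadicPoint_le (hv : RadialWeight v) (hC : 0 ≤ C)
    (hD : ∀ r ∈ Ico (0 : ℝ) 1, hatw v r ≤ C * hatw v ((1 + r) / 2)) {x : ℕ} {ρ : ℝ}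
    (hρ : 0 ≤ ρ) (hρ1 : ρ < 1) (hx : 1 ≤ x * (1 - ρ)) (m : ℕ) :
    ∫ s in dyadicPoint ρ (m + 1)..dyadicPoint ρ m, s ^ x * v s ≤
      C ^ (m + 1) * exp (-2 ^ m) * hatw v ρ := by
  have hpow : dyadicPoint ρ m ^ x ≤ exp (-2 ^ m) :=
    calc dyadicPoint ρ m ^ x ≤ exp (-(2 ^ m * (1 - ρ))) ^ x :=
          pow_le_pow_left₀ (dyadicPoint_nonneg ρ m) (dyadicPoint_le_exp ρ m) x
      _ = exp (-(2 ^ m * (x * (1 - ρ)))) := by rw [← exp_nat_mul]; ring_nf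
      _ ≤ exp (-2 ^ m) := exp_le_exp.mpr (by nlinarith [pow_pos two_pos (M₀ := ℝ) m])
  have hdouble : hatw v (dyadicPoint ρ (m + 1)) ≤ C ^ (m + 1) * hatw v ρ :=
    hv.hatw_le_pow_mul_hatw hC hD (m + 1) (dyadicPoint_nonneg ρ _)
      (dyadicPoint_le hρ hρ1.le _) hρ1 (one_sub_dyadicPoint_le ρ _)
  calc ∫ s in dyadicPoint ρ (m + 1)..dyadicPoint ρ m, s ^ x * v s
      ≤ dyadicPoint ρ m ^ x * hatw v (dyadicPoint ρ (m + 1)) :=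
        hv.integral_pow_mul_le x (dyadicPoint_nonneg ρ _) (dyadicPoint_succ_le hρ1.le m)
          ((dyadicPoint_le hρ hρ1.le m).trans hρ1.le)
    _ ≤ exp (-2 ^ m) * (C ^ (m + 1) * hatw v ρ) :=
        mul_le_mul hpow hdouble
          (hv.hatw_nonneg (dyadicPoint_nonneg ρ _) ((dyadicPoint_le hρ hρ1.le _).trans hρ1.le))
          (exp_pos _).le
    _ = C ^ (m + 1) * exp (-2 ^ m) * hatw v ρ := by ring

lemma vx_le_mul_hatw (hv : RadialWeight v) (hC : 0 ≤ C)
    (hD : ∀ r ∈ Ico (0 : ℝ) 1, hatw v r ≤ C * hatw v ((1 + r) / 2)) {x : ℕ} {ρ : ℝ}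
    (hρ : 0 ≤ ρ) (hρ1 : ρ < 1) (hx : 1 ≤ x * (1 - ρ)) :
    vx v x ≤ (1 + ∑' m : ℕ, C ^ (m + 1) * exp (-2 ^ m)) * hatw v ρ := by
  have hmem (m : ℕ) : dyadicPoint ρ m ∈ Icc (0 : ℝ) 1 :=
    ⟨dyadicPoint_nonneg ρ m, (dyadicPoint_le hρ hρ1.le m).trans hρ1.le⟩
  have hhead : ∫ s in (0 : ℝ)..ρ, s ^ x * v s =
      ∑ m ∈ Finset.range x, ∫ s in dyadicPoint ρ (m + 1)..dyadicPoint ρ m, s ^ x * v s := by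
    have hlast : dyadicPoint ρ x = 0 := dyadicPoint_eq_zero <| hx.trans <|
      mul_le_mul_of_nonneg_right (by exact_mod_cast Nat.lt_two_pow_self.le) (by linarith)
    have htel := intervalIntegral.sum_integral_adjacent_intervals (μ := volume) (n := x)
      fun m _ => hv.intervalIntegrable_pow_mul x (hmem m) (hmem (m + 1))
    rw [← neg_neg (∑ m ∈ Finset.range x, _), ← Finset.sum_neg_distrib]
    simp_rw [← intervalIntegral.integral_symm]
    rw [htel, hlast, dyadicPoint_zero hρ, intervalIntegral.integral_symm]
  have htail : ∫ s in ρ..1, s ^ x * v s ≤ hatw v ρ := by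
    simpa using hv.integral_pow_mul_le x hρ hρ1.le le_rfl
  have hpartial : ∑ m ∈ Finset.range x, C ^ (m + 1) * exp (-2 ^ m) ≤
      ∑' m : ℕ, C ^ (m + 1) * exp (-2 ^ m) :=
    (summable_pow_mul_exp_neg_two_pow hC).sum_le_tsum _ fun m _ => by positivity
  calc vx v x = (∫ s in (0 : ℝ)..ρ, s ^ x * v s) + ∫ s in ρ..1, s ^ x * v s :=
        (intervalIntegral.integral_add_adjacent_intervals
          (hv.intervalIntegrable_pow_mul x ⟨le_rfl, zero_le_one⟩ ⟨hρ, hρ1.le⟩)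
          (hv.intervalIntegrable_pow_mul x ⟨hρ, hρ1.le⟩ ⟨zero_le_one, le_rfl⟩)).symm
    _ ≤ (∑ m ∈ Finset.range x, C ^ (m + 1) * exp (-2 ^ m)) * hatw v ρ + hatw v ρ := by
        rw [hhead, Finset.sum_mul]
        exact add_le_add
          (Finset.sum_le_sum fun m _ => hv.integral_dyadicPoint_le hC hD hρ hρ1 hx m) htail
    _ ≤ (1 + ∑' m : ℕ, C ^ (m + 1) * exp (-2 ^ m)) * hatw v ρ := by
        nlinarith [hv.hatw_nonneg hρ hρ1.le]

lemma vx_two_mul_le_mul_hatw_radius (hv : RadialWeight v) (hC : 0 ≤ C)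
    (hD : ∀ r ∈ Ico (0 : ℝ) 1, hatw v r ≤ C * hatw v ((1 + r) / 2)) {k : ℕ} (hk : 1 ≤ k) :
    vx v (2 * k) ≤ (1 + ∑' m : ℕ, C ^ (m + 1) * exp (-2 ^ m)) * hatw v (radius k) := by
  refine hv.vx_le_mul_hatw hC hD (radius_nonneg k) (radius_lt_one k) ?_
  rw [one_sub_radius, Nat.cast_mul, Nat.cast_two, mul_one_div, le_div_iff₀ (by positivity)]
  linarith [(by exact_mod_cast hk : (1 : ℝ) ≤ k)]

lemma hatw_radius_le_vx (hv : RadialWeight v) (hC : 0 ≤ C)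
    (hD : ∀ r ∈ Ico (0 : ℝ) 1, hatw v r ≤ C * hatw v ((1 + r) / 2)) (n : ℕ) :
    hatw v (radius n) ≤ 2 * C ^ 2 * vx v (2 * n + 1) := by
  have hn : (0 : ℝ) < (n : ℝ) + 1 := by positivity
  set t : ℝ := 1 - 1 / (4 * ((n : ℝ) + 1)) with ht
  have ht0 : 0 ≤ t := by
    rw [ht, sub_nonneg, div_le_one (by positivity)]; linarith
  have ht1 : t < 1 := by rw [ht]; linarith [(by positivity : 0 < 1 / (4 * ((n : ℝ) + 1)))]
  have h1t : 1 - t = 1 / (4 * ((n : ℝ) + 1)) := by rw [ht]; ring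
  have hdouble : hatw v (radius n) ≤ C ^ 2 * hatw v t := by
    refine hv.hatw_le_pow_mul_hatw hC hD 2 (radius_nonneg n) ?_ ht1 ?_
    · rw [← sub_le_sub_iff_left 1, one_sub_radius, h1t]
      gcongr; linarith
    · rw [one_sub_radius, h1t]; field_simp; norm_num
  have hmoment : hatw v t ≤ 2 * vx v (2 * n + 1) := by
    refine hv.hatw_le_two_mul_vx ht0 ht1.le ?_
    rw [h1t]; push_cast
    rw [mul_one_div, div_le_iff₀ (by positivity)]; linarith
  nlinarith [pow_nonneg hC 2]

lemma ofReal_div_le_tsum_seriesTerm (hv : RadialWeight v) (k : ℕ) :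
    ENNReal.ofReal (1 / 36 / (((k : ℝ) + 1) ^ 3 * vx v (2 * k))) ≤
      ∑' n, ENNReal.ofReal (seriesTerm v k n) := by
  have hk : (0 : ℝ) < (k : ℝ) + 1 := by positivity
  have hv2k := hv.vx_pos (2 * k)
  have hterm : ∀ n ∈ Finset.Icc k (2 * k),
      ENNReal.ofReal (1 / (36 * ((k : ℝ) + 1) ^ 4 * vx v (2 * k))) ≤
        ENNReal.ofReal (seriesTerm v k n) := by
    intro n hn
    obtain ⟨hkn, hnk⟩ := Finset.mem_Icc.mp hn
    have hnk' : (n : ℝ) ≤ 2 * k := by exact_mod_cast hnk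
    apply ENNReal.ofReal_le_ofReal
    rw [seriesTerm]
    gcongr 1 / ?_
    · exact mul_pos (by positivity) (hv.vx_pos _)
    calc ((n : ℝ) + 1) ^ 2 * (((n : ℝ) + 1) + (k : ℝ) + 1) ^ 2 * vx v (2 * n + 1)
        ≤ (2 * ((k : ℝ) + 1)) ^ 2 * (3 * ((k : ℝ) + 1)) ^ 2 * vx v (2 * k) := by
          gcongr
          · exact (hv.vx_pos _).le
          · linarith
          · linarith
          · exact hv.vx_anti (by omega)
      _ = 36 * ((k : ℝ) + 1) ^ 4 * vx v (2 * k) := by ring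
  calc ENNReal.ofReal (1 / 36 / (((k : ℝ) + 1) ^ 3 * vx v (2 * k)))
      = ∑ _n ∈ Finset.Icc k (2 * k),
          ENNReal.ofReal (1 / (36 * ((k : ℝ) + 1) ^ 4 * vx v (2 * k))) := by
        rw [Finset.sum_const, Nat.card_Icc, nsmul_eq_mul, show 2 * k + 1 - k = k + 1 by omega,
          ← ENNReal.ofReal_natCast, ← ENNReal.ofReal_mul (by positivity)]
        congr 1; push_cast; field_simp
    _ ≤ ∑ n ∈ Finset.Icc k (2 * k), ENNReal.ofReal (seriesTerm v k n) :=
        Finset.sum_le_sum hterm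
    _ ≤ ∑' n, ENNReal.ofReal (seriesTerm v k n) := ENNReal.sum_le_tsum _

lemma lintegral_inv_hatw_le (hv : RadialWeight v) (hC : 0 < C)
    (hD : ∀ r ∈ Ico (0 : ℝ) 1, hatw v r ≤ C * hatw v ((1 + r) / 2)) {r : ℝ} (hr : 0 < r)
    (hr1 : r < 1) :
    ∫⁻ s in Ioo 0 r, ENNReal.ofReal (1 / hatw v s) ≤
      M1v v ^ 2 * ENNReal.ofReal (2 * C * (1 - r) / hatw v r) := by
  have hM : (∫⁻ s in Ioo r 1, ENNReal.ofReal (hatw v s / (1 - s) ^ 2)) ^ (1 / 2 : ℝ) *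
      (∫⁻ s in Ioo 0 r, ENNReal.ofReal (1 / hatw v s)) ^ (1 / 2 : ℝ) ≤ M1v v :=
    by unfold M1v; exact le_iSup₂_of_le r ⟨hr, hr1⟩ le_rfl
  have hW := hv.hatw_pos_s10 hr.le hr1
  have h1r : 0 < 1 - r := sub_pos.mpr hr1
  have hlow : ENNReal.ofReal (hatw v r / (2 * C * (1 - r))) ≤
      ∫⁻ s in Ioo r 1, ENNReal.ofReal (hatw v s / (1 - s) ^ 2) := by
    have hbound : ∀ s ∈ Ioo r ((1 + r) / 2),
        hatw v r / C / (1 - r) ^ 2 ≤ hatw v s / (1 - s) ^ 2 := by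
      intro s hs
      have hsW : hatw v r / C ≤ hatw v s := by
        rw [div_le_iff₀ hC, mul_comm]
        exact (hD r ⟨hr.le, hr1⟩).trans (mul_le_mul_of_nonneg_left
          (hv.hatw_anti (hr.le.trans hs.1.le) hs.2.le (by linarith)) hC.le)
      exact div_le_div₀ (hv.hatw_nonneg (hr.le.trans hs.1.le) (by linarith [hs.2])) hsW
        (by nlinarith [hs.2]) (by nlinarith [hs.1, hs.2])
    calc ENNReal.ofReal (hatw v r / (2 * C * (1 - r)))
        = ENNReal.ofReal (hatw v r / C / (1 - r) ^ 2 * ((1 + r) / 2 - r)) := by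
          congr 1; field_simp; ring
      _ ≤ ∫⁻ s in Ioo r ((1 + r) / 2), ENNReal.ofReal (hatw v s / (1 - s) ^ 2) :=
          ofReal_mul_le_setLIntegral_Ioo (by positivity) hbound
      _ ≤ _ := lintegral_mono_set (Ioo_subset_Ioo le_rfl (by linarith))
  simpa only [one_div_div] using
    le_sq_mul_ofReal_inv_of_rpow_mul_le hM (by positivity) hlow

lemma lintegral_sq_div_hatw_le (hv : RadialWeight v) {r : ℝ} (hr : 1 / 2 ≤ r) (hr1 : r < 1) :
    ∫⁻ s in Ioo r 1, ENNReal.ofReal ((1 - s) ^ 2 / hatw v s) ≤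
      M2v v ^ 2 * ENNReal.ofReal (16 * (1 - r) ^ 3 / hatw v r) := by
  have hM : (∫⁻ s in Ioo 0 r, ENNReal.ofReal (hatw v s / (1 - s) ^ 4)) ^ (1 / 2 : ℝ) *
      (∫⁻ s in Ioo r 1, ENNReal.ofReal ((1 - s) ^ 2 / hatw v s)) ^ (1 / 2 : ℝ) ≤ M2v v :=
    by unfold M2v; exact le_iSup₂_of_le r ⟨by linarith, hr1⟩ le_rfl
  have hW := hv.hatw_pos_s10 (by linarith) hr1
  have h1r : 0 < 1 - r := sub_pos.mpr hr1
  have hlow : ENNReal.ofReal (hatw v r / (16 * (1 - r) ^ 3)) ≤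
      ∫⁻ s in Ioo 0 r, ENNReal.ofReal (hatw v s / (1 - s) ^ 4) := by
    have hbound : ∀ s ∈ Ioo (2 * r - 1) r,
        hatw v r / (16 * (1 - r) ^ 4) ≤ hatw v s / (1 - s) ^ 4 := by
      intro s hs
      have hs0 : 0 ≤ s := by linarith [hs.1]
      have h4 : (1 - s) ^ 4 ≤ 16 * (1 - r) ^ 4 := by
        calc (1 - s) ^ 4 ≤ (2 * (1 - r)) ^ 4 :=
              pow_le_pow_left₀ (by linarith [hs.2]) (by linarith [hs.1]) 4
          _ = 16 * (1 - r) ^ 4 := by ring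
      exact div_le_div₀ (hv.hatw_nonneg hs0 (by linarith [hs.2]))
        (hv.hatw_anti hs0 hs.2.le hr1.le) (pow_pos (by linarith [hs.2]) 4) h4
    calc ENNReal.ofReal (hatw v r / (16 * (1 - r) ^ 3))
        = ENNReal.ofReal (hatw v r / (16 * (1 - r) ^ 4) * (r - (2 * r - 1))) := by
          congr 1; field_simp; ring
      _ ≤ ∫⁻ s in Ioo (2 * r - 1) r, ENNReal.ofReal (hatw v s / (1 - s) ^ 4) :=
          ofReal_mul_le_setLIntegral_Ioo (by positivity) hbound
      _ ≤ _ := lintegral_mono_set (Ioo_subset_Ioo (by linarith) le_rfl)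
  simpa only [one_div_div] using
    le_sq_mul_ofReal_inv_of_rpow_mul_le hM (by positivity) hlow

lemma seriesTerm_le (hv : RadialWeight v) (hC : 0 ≤ C)
    (hD : ∀ r ∈ Ico (0 : ℝ) 1, hatw v r ≤ C * hatw v ((1 + r) / 2)) (k n : ℕ) :
    seriesTerm v k n ≤
      2 * C ^ 2 / (((n : ℝ) + 1) ^ 2 * (((n : ℝ) + 1) + k + 1) ^ 2 * hatw v (radius n)) := by
  have hP : (0 : ℝ) < ((n : ℝ) + 1) ^ 2 * (((n : ℝ) + 1) + k + 1) ^ 2 := by positivity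
  rw [seriesTerm, div_le_div_iff₀ (mul_pos hP (hv.vx_pos _))
    (mul_pos hP (hv.hatw_pos_s10 (radius_nonneg n) (radius_lt_one n)))]
  nlinarith [mul_le_mul_of_nonneg_left (hv.hatw_radius_le_vx hC hD n) hP.le]

lemma ofReal_div_le_lintegral_inv_hatw (hv : RadialWeight v) {c : ℝ} (hc : 0 ≤ c) (n : ℕ) :
    ENNReal.ofReal (c / (((n : ℝ) + 1) ^ 2 * hatw v (radius n))) ≤
      ENNReal.ofReal (2 * c) *
        ∫⁻ s in Ioo (radius n) (radius (n + 1)), ENNReal.ofReal (1 / hatw v s) := by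
  have hW := hv.hatw_pos_s10 (radius_nonneg n) (radius_lt_one n)
  have hbound : ∀ s ∈ Ioo (radius n) (radius (n + 1)), 1 / hatw v (radius n) ≤ 1 / hatw v s :=
    fun s hs => one_div_le_one_div_of_le
      (hv.hatw_pos_s10 ((radius_nonneg n).trans hs.1.le) (hs.2.trans (radius_lt_one _)))
      (hv.hatw_anti (radius_nonneg n) hs.1.le (hs.2.trans (radius_lt_one _)).le)
  calc ENNReal.ofReal (c / (((n : ℝ) + 1) ^ 2 * hatw v (radius n)))
      ≤ ENNReal.ofReal (2 * c) *
          ENNReal.ofReal (1 / hatw v (radius n) * (radius (n + 1) - radius n)) := by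
        rw [← ENNReal.ofReal_mul (by positivity), radius_succ_sub]
        apply ENNReal.ofReal_le_ofReal
        rw [div_le_iff₀ (by positivity)]
        field_simp
        nlinarith
    _ ≤ _ := by gcongr; exact ofReal_mul_le_setLIntegral_Ioo (by positivity) hbound

lemma ofReal_div_le_lintegral_sq_div_hatw (hv : RadialWeight v) {c : ℝ} (hc : 0 ≤ c) (n : ℕ) :
    ENNReal.ofReal (c / (((n : ℝ) + 1) ^ 4 * hatw v (radius n))) ≤
      ENNReal.ofReal (8 * c) *
        ∫⁻ s in Ioo (radius n) (radius (n + 1)), ENNReal.ofReal ((1 - s) ^ 2 / hatw v s) := by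
  have hW := hv.hatw_pos_s10 (radius_nonneg n) (radius_lt_one n)
  have hbound : ∀ s ∈ Ioo (radius n) (radius (n + 1)),
      (1 / ((n : ℝ) + 2)) ^ 2 / hatw v (radius n) ≤ (1 - s) ^ 2 / hatw v s := by
    intro s hs
    have hs1 : s < 1 := hs.2.trans (radius_lt_one _)
    have hgap : 1 / ((n : ℝ) + 2) ≤ 1 - s := by
      have h := one_sub_radius (n + 1)
      rw [Nat.cast_succ, add_assoc, one_add_one_eq_two] at h
      linarith [hs.2]
    exact div_le_div₀ (by positivity) (pow_le_pow_left₀ (by positivity) hgap 2)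
      (hv.hatw_pos_s10 ((radius_nonneg n).trans hs.1.le) hs1)
      (hv.hatw_anti (radius_nonneg n) hs.1.le hs1.le)
  calc ENNReal.ofReal (c / (((n : ℝ) + 1) ^ 4 * hatw v (radius n)))
      ≤ ENNReal.ofReal (8 * c) * ENNReal.ofReal
          ((1 / ((n : ℝ) + 2)) ^ 2 / hatw v (radius n) * (radius (n + 1) - radius n)) := by
        rw [← ENNReal.ofReal_mul (by positivity), radius_succ_sub]
        apply ENNReal.ofReal_le_ofReal
        rw [div_le_iff₀ (by positivity)]
        field_simp
        have hcube : ((n : ℝ) + 2) ^ 3 ≤ (2 * ((n : ℝ) + 1)) ^ 3 := by gcongr; linarith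
        nlinarith
    _ ≤ _ := by gcongr; exact ofReal_mul_le_setLIntegral_Ioo (by positivity) hbound

lemma sum_range_seriesTerm_le (hv : RadialWeight v) (hC : 0 < C)
    (hD : ∀ r ∈ Ico (0 : ℝ) 1, hatw v r ≤ C * hatw v ((1 + r) / 2)) {k : ℕ} (hk : 1 ≤ k) :
    ∑ n ∈ Finset.range k, ENNReal.ofReal (seriesTerm v k n) ≤
      M1v v ^ 2 * ENNReal.ofReal (8 * C ^ 3 / (((k : ℝ) + 1) ^ 3 * hatw v (radius k))) := by
  set c : ℝ := 2 * C ^ 2 / ((k : ℝ) + 1) ^ 2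
  have hstep (n : ℕ) : ENNReal.ofReal (seriesTerm v k n) ≤ ENNReal.ofReal (2 * c) *
      ∫⁻ s in Ioo (radius n) (radius (n + 1)), ENNReal.ofReal (1 / hatw v s) := by
    refine le_trans (ENNReal.ofReal_le_ofReal ?_)
      (hv.ofReal_div_le_lintegral_inv_hatw (by positivity) n)
    refine (hv.seriesTerm_le hC.le hD k n).trans ?_
    have hW := hv.hatw_pos_s10 (radius_nonneg n) (radius_lt_one n)
    rw [div_div, mul_right_comm, mul_comm (((k : ℝ) + 1) ^ 2)]
    gcongr
    linarith
  have hk0 := half_le_radius hk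
  calc ∑ n ∈ Finset.range k, ENNReal.ofReal (seriesTerm v k n)
      ≤ ∑ n ∈ Finset.range k, ENNReal.ofReal (2 * c) *
          ∫⁻ s in Ioo (radius n) (radius (n + 1)), ENNReal.ofReal (1 / hatw v s) :=
        Finset.sum_le_sum fun n _ => hstep n
    _ ≤ ENNReal.ofReal (2 * c) * ∫⁻ s in Ioo 0 (radius k), ENNReal.ofReal (1 / hatw v s) := by
        rw [← Finset.mul_sum, ← radius_zero]
        gcongr
        exact sum_setLIntegral_Ioo_le radius_mono _ k
    _ ≤ ENNReal.ofReal (2 * c) *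
          (M1v v ^ 2 * ENNReal.ofReal (2 * C * (1 - radius k) / hatw v (radius k))) := by
        gcongr
        exact hv.lintegral_inv_hatw_le hC hD (by linarith) (radius_lt_one k)
    _ = M1v v ^ 2 * ENNReal.ofReal (8 * C ^ 3 / (((k : ℝ) + 1) ^ 3 * hatw v (radius k))) := by
        rw [mul_left_comm, ← ENNReal.ofReal_mul (by positivity), one_sub_radius]
        have hW := hv.hatw_pos_s10 (radius_nonneg k) (radius_lt_one k)
        congr 2
        simp only [c]
        field_simp
        ring

lemma tsum_seriesTerm_add_le (hv : RadialWeight v) (hC : 0 ≤ C)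
    (hD : ∀ r ∈ Ico (0 : ℝ) 1, hatw v r ≤ C * hatw v ((1 + r) / 2)) {k : ℕ} (hk : 1 ≤ k) :
    ∑' i, ENNReal.ofReal (seriesTerm v k (i + k)) ≤
      M2v v ^ 2 * ENNReal.ofReal (256 * C ^ 2 / (((k : ℝ) + 1) ^ 3 * hatw v (radius k))) := by
  have hstep (i : ℕ) : ENNReal.ofReal (seriesTerm v k (i + k)) ≤
      ENNReal.ofReal (8 * (2 * C ^ 2)) * ∫⁻ s in Ioo (radius (i + k)) (radius (i + 1 + k)),
        ENNReal.ofReal ((1 - s) ^ 2 / hatw v s) := by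
    rw [Nat.add_right_comm]
    refine le_trans (ENNReal.ofReal_le_ofReal ?_)
      (hv.ofReal_div_le_lintegral_sq_div_hatw (by positivity) (i + k))
    refine (hv.seriesTerm_le hC hD k (i + k)).trans ?_
    have hW := hv.hatw_pos_s10 (radius_nonneg (i + k)) (radius_lt_one (i + k))
    rw [show 4 = 2 + 2 from rfl, pow_add]
    gcongr
    linarith
  calc ∑' i, ENNReal.ofReal (seriesTerm v k (i + k))
      ≤ ∑' i, ENNReal.ofReal (8 * (2 * C ^ 2)) *
          ∫⁻ s in Ioo (radius (i + k)) (radius (i + 1 + k)),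
            ENNReal.ofReal ((1 - s) ^ 2 / hatw v s) := ENNReal.tsum_le_tsum hstep
    _ ≤ ENNReal.ofReal (8 * (2 * C ^ 2)) *
          ∫⁻ s in Ioo (radius k) 1, ENNReal.ofReal ((1 - s) ^ 2 / hatw v s) := by
        rw [ENNReal.tsum_mul_left]
        gcongr
        simpa using tsum_setLIntegral_Ioo_le (a := fun i => radius (i + k))
          (fun i j hij => radius_mono (by omega)) (fun i => (radius_lt_one _).le) _
    _ ≤ ENNReal.ofReal (8 * (2 * C ^ 2)) *
          (M2v v ^ 2 * ENNReal.ofReal (16 * (1 - radius k) ^ 3 / hatw v (radius k))) := by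
        gcongr
        exact hv.lintegral_sq_div_hatw_le (half_le_radius hk) (radius_lt_one k)
    _ = M2v v ^ 2 * ENNReal.ofReal (256 * C ^ 2 / (((k : ℝ) + 1) ^ 3 * hatw v (radius k))) := by
        have hW := hv.hatw_pos_s10 (radius_nonneg k) (radius_lt_one k)
        rw [mul_left_comm, ← ENNReal.ofReal_mul (by positivity), one_sub_radius]
        congr 2
        field_simp
        ring

lemma tsum_seriesTerm_le (hv : RadialWeight v) (hC : 0 < C)
    (hD : ∀ r ∈ Ico (0 : ℝ) 1, hatw v r ≤ C * hatw v ((1 + r) / 2)) (hM1 : M1v v < ⊤)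
    (hM2 : M2v v < ⊤) {k : ℕ} (hk : 1 ≤ k) :
    ∑' n, ENNReal.ofReal (seriesTerm v k n) ≤
      ENNReal.ofReal ((8 * C ^ 3 * (M1v v).toReal ^ 2 + 256 * C ^ 2 * (M2v v).toReal ^ 2) /
        (((k : ℝ) + 1) ^ 3 * hatw v (radius k))) := by
  have hW := hv.hatw_pos_s10 (radius_nonneg k) (radius_lt_one k)
  have hsplit : ∑' n, ENNReal.ofReal (seriesTerm v k n) =
      ∑ n ∈ Finset.range k, ENNReal.ofReal (seriesTerm v k n) +
        ∑' i, ENNReal.ofReal (seriesTerm v k (i + k)) :=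
    ENNReal.summable.hasSum.sum_range_add.tsum_eq
  rw [hsplit]
  refine (add_le_add (hv.sum_range_seriesTerm_le hC hD hk)
    (hv.tsum_seriesTerm_add_le hC.le hD hk)).trans_eq ?_
  have hsq {M : ℝ≥0∞} (hM : M < ⊤) : M ^ 2 = ENNReal.ofReal (M.toReal ^ 2) := by
    rw [ENNReal.ofReal_pow ENNReal.toReal_nonneg, ENNReal.ofReal_toReal hM.ne]
  rw [hsq hM1, hsq hM2, ← ENNReal.ofReal_mul (by positivity), ← ENNReal.ofReal_mul (by positivity),
    ← ENNReal.ofReal_add (by positivity) (by positivity)]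
  congr 1
  ring

end RadialWeight

/-- the two-sided estimate
`Σ_{n≥1} 1/(n²(n+k+1)² v_{2n-1}) ≍ 1/((k+1)³ v_{2k})` for `k ≥ 1`. -/
theorem statement10 (v : ℝ → ℝ) (hv : RadialWeight v) (hD : DoublingD v)
    (hM1 : M1v v < ⊤) (hM2 : M2v v < ⊤) :
    ∃ c C : ℝ, 0 < c ∧ c ≤ C ∧ ∀ k : ℕ, 1 ≤ k →
      ENNReal.ofReal (c / (((k:ℝ)+1)^3 * vx v (2*k))) ≤
        (∑' n : ℕ, ENNReal.ofReal
          (1 / (((n:ℝ)+1)^2 * (((n:ℝ)+1) + (k:ℝ) + 1)^2 * vx v (2*n+1)))) ∧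
      (∑' n : ℕ, ENNReal.ofReal
          (1 / (((n:ℝ)+1)^2 * (((n:ℝ)+1) + (k:ℝ) + 1)^2 * vx v (2*n+1)))) ≤
        ENNReal.ofReal (C / (((k:ℝ)+1)^3 * vx v (2*k))) := by
  obtain ⟨D, hD1, hD⟩ := hD
  have hD0 : 0 < D := one_pos.trans_le hD1
  set K := 1 + ∑' m : ℕ, D ^ (m + 1) * exp (-2 ^ m)
  set E := 8 * D ^ 3 * (M1v v).toReal ^ 2 + 256 * D ^ 2 * (M2v v).toReal ^ 2
  refine ⟨1 / 36, max (1 / 36) (E * K), by norm_num, le_max_left _ _, fun k hk =>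
    ⟨hv.ofReal_div_le_tsum_seriesTerm k, (hv.tsum_seriesTerm_le hD0 hD hM1 hM2 hk).trans ?_⟩⟩
  have hW := hv.hatw_pos_s10 (radius_nonneg k) (radius_lt_one k)
  have hv2k := hv.vx_pos (2 * k)
  have hvx : vx v (2 * k) ≤ K * hatw v (radius k) := hv.vx_two_mul_le_mul_hatw_radius hD0.le hD hk
  refine ENNReal.ofReal_le_ofReal ?_
  calc E / (((k : ℝ) + 1) ^ 3 * hatw v (radius k))
      ≤ E * K / (((k : ℝ) + 1) ^ 3 * vx v (2 * k)) := by
        rw [div_le_div_iff₀ (by positivity) (by positivity)]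
        nlinarith [mul_le_mul_of_nonneg_left hvx (by positivity : 0 ≤ E * ((k : ℝ) + 1) ^ 3)]
    _ ≤ max (1 / 36) (E * K) / (((k : ℝ) + 1) ^ 3 * vx v (2 * k)) := by
        gcongr
        exact le_max_right _ _
end
end
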